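/- Let $k \geq 2\lambda + 1$ and $s = \lfloor (k-1)/\lambda \rfloor$ (so $s \geq 2$). Let $(V,\mathcal{B})$ be a cyclic $(v,k,\lambda)$-design with orbits $\mathcal{B}_1,\ldots,\mathcal{B}_t$ and let $\mathcal{P}'$ be a partial parallel class containing at most $s$ blocks from each orbit. If for each orbit index $i$ with $|\mathcal{P}' \cap \mathcal{B}_i| \leq s-2$ the orbit $\mathcal{B}_i$ contains more than $k^2(ks - k + 1)(d(\mathcal{P}') - 1)$ $\mathcal{P}'$-good blocks, then there is a partial parallel class $\mathcal{P}''$ of $(V,\mathcal{B})$ such that the number of orbits meeting $\mathcal{P}''$ in exactly $s-1$ blocks is at most $(k+1)d(\mathcal{P}') + \tau_{s-1}(\mathcal{P}')$ and every other orbit meets $\mathcal{P}''$ in exactly $s$ blocks. -/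

import Mathlib

open Finset

/-- The orbit (as a finset of indices) of a block index under the translation
action of `ZMod v`. -/
def orbF (v : ℕ) [NeZero v] {ι : Type} [DecidableEq ι] [AddAction (ZMod v) ι] (b : ι) :
    Finset ι :=
  Finset.univ.image (fun t : ZMod v => t +ᵥ b)

/-- The set of block orbits of the design, as finsets of indices. -/
def Orbs (v : ℕ) [NeZero v] (ι : Type) [Fintype ι] [DecidableEq ι]
    [AddAction (ZMod v) ι] : Finset (Finset ι) :=
  Finset.univ.image (orbF v (ι := ι))

/-- `P` is a partial parallel class: its blocks are pairwise disjoint. -/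
def isPPC {v : ℕ} {ι : Type} (ℬ : ι → Finset (ZMod v)) (P : Finset ι) : Prop :=
  ∀ b ∈ P, ∀ c ∈ P, b ≠ c → Disjoint (ℬ b) (ℬ c)

/-- `τ_a(P)`: the number of orbits meeting `P` in exactly `a` blocks. -/
def tauP (v : ℕ) [NeZero v] (ι : Type) [Fintype ι] [DecidableEq ι]
    [AddAction (ZMod v) ι] (P : Finset ι) (a : ℕ) : ℕ :=
  ((Orbs v ι).filter (fun O => (P ∩ O).card = a)).card

/-- `d(P) = ∑_{a=0}^{s-2} (s-1-a) τ_a(P)`: how far `P` is from meeting every orbit in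
at least `s-1` blocks. -/
def dPar (v : ℕ) [NeZero v] (ι : Type) [Fintype ι] [DecidableEq ι]
    [AddAction (ZMod v) ι] (s : ℕ) (P : Finset ι) : ℕ :=
  ∑ a ∈ Finset.range (s - 1), (s - 1 - a) * tauP v ι P a

/-- A block `b` is `P`-good if it intersects at most one block of `P ∩ 𝒪` for every
orbit `𝒪`, and intersects no block of `P ∩ 𝒪` for every orbit `𝒪` meeting `P` in at
most `s-1` blocks. -/
def isGood (v : ℕ) [NeZero v] (ι : Type) [Fintype ι] [DecidableEq ι]
    [AddAction (ZMod v) ι] (ℬ : ι → Finset (ZMod v)) (s : ℕ) (P : Finset ι)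
    (b : ι) : Prop :=
  (∀ O ∈ Orbs v ι, ((P ∩ O).filter (fun c => ((ℬ b) ∩ (ℬ c)).Nonempty)).card ≤ 1) ∧
    ∀ O ∈ Orbs v ι, (P ∩ O).card ≤ s - 1 → ∀ c ∈ P ∩ O, Disjoint (ℬ b) (ℬ c)

instance (v : ℕ) [NeZero v] (ι : Type) [Fintype ι] [DecidableEq ι]
    [AddAction (ZMod v) ι] (ℬ : ι → Finset (ZMod v)) (s : ℕ) (P : Finset ι) :
    DecidablePred (isGood v ι ℬ s P) := fun b => by
  unfold isGood; infer_instance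

/-!
Induction on `d(P')`. If `d(P') > 0`, some orbit meets `P'` in fewer than `s - 1` blocks and
contains a `P'`-good block `b`. Swapping `b` in for the blocks of `P'` it meets (at most `k` of
them, at most one per orbit, and only from orbits holding `s` blocks) raises the count of the
orbit of `b` by one and lowers at most `k` others from `s` to `s - 1`; so `d` drops by one while
`τ_{s-1}` grows by at most `k + 1`. A good block can only turn bad if it meets `b` or a block
sharing an orbit with one of the removed blocks, and counting translates bounds these by
`k² + k(s - 1)·k² = k²(ks - k + 1)` per orbit, which is the slack in the hypothesis.
-/

section Orbits

variable {v : ℕ} [NeZero v] {ι : Type} [DecidableEq ι] [AddAction (ZMod v) ι]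

lemma coe_orbF (b : ι) : (orbF v b : Set ι) = AddAction.orbit (ZMod v) b := by
  ext c
  simp [orbF, AddAction.mem_orbit_iff]

lemma mem_orbF_self (b : ι) : b ∈ orbF v b := by
  rw [← mem_coe, coe_orbF]
  exact AddAction.mem_orbit_self b

lemma orbF_eq_of_mem {b c : ι} (h : c ∈ orbF v b) : orbF v c = orbF v b := by
  rw [← mem_coe, coe_orbF] at h
  exact coe_injective (by rw [coe_orbF, coe_orbF, AddAction.orbit_eq_iff]; exact h)

variable [Fintype ι]

lemma orbF_mem_Orbs (b : ι) : orbF v b ∈ Orbs v ι :=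
  mem_image_of_mem _ (mem_univ b)

lemma eq_orbF_of_mem {O : Finset ι} (hO : O ∈ Orbs v ι) {b : ι} (hb : b ∈ O) :
    O = orbF v b := by
  obtain ⟨c, -, rfl⟩ := mem_image.1 hO
  exact (orbF_eq_of_mem hb).symm

lemma dPar_eq_sum (s : ℕ) (P : Finset ι) :
    dPar v ι s P = ∑ O ∈ Orbs v ι, (s - 1 - #(P ∩ O)) := by
  have hterm : ∀ O ∈ Orbs v ι, s - 1 - #(P ∩ O) =
      ∑ a ∈ range (s - 1), if #(P ∩ O) = a then s - 1 - a else 0 := by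
    intro O _
    rw [sum_ite_eq]
    split_ifs with h
    · rfl
    · rw [mem_range] at h; omega
  rw [sum_congr rfl hterm, sum_comm, dPar]
  refine sum_congr rfl fun a _ => ?_
  rw [tauP, ← sum_filter, sum_const, smul_eq_mul, mul_comm]

lemma card_inter_eq_of_dPar_eq_zero {s : ℕ} {P : Finset ι} (hd : dPar v ι s P = 0)
    (hmax : ∀ O ∈ Orbs v ι, #(P ∩ O) ≤ s) {O : Finset ι} (hO : O ∈ Orbs v ι) :
    #(P ∩ O) = s - 1 ∨ #(P ∩ O) = s := by
  rw [dPar_eq_sum, sum_eq_zero_iff] at hd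
  have := hd O hO
  have := hmax O hO
  omega

lemma exists_card_inter_lt_of_dPar_ne_zero {s : ℕ} {P : Finset ι} (hd : dPar v ι s P ≠ 0) :
    ∃ O ∈ Orbs v ι, #(P ∩ O) < s - 1 := by
  rw [dPar_eq_sum] at hd
  obtain ⟨O, hO, hne⟩ := exists_ne_zero_of_sum_ne_zero hd
  exact ⟨O, hO, by omega⟩

lemma dPar_pos_of_card_inter_lt {s : ℕ} {P O : Finset ι} (hO : O ∈ Orbs v ι)
    (h : #(P ∩ O) < s - 1) : 0 < dPar v ι s P := by
  rw [dPar_eq_sum]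
  exact lt_of_lt_of_le (by omega)
    (single_le_sum (f := fun O => s - 1 - #(P ∩ O)) (fun _ _ => Nat.zero_le _) hO)

end Orbits

section Meeting

variable {v : ℕ} {ι : Type} (ℬ : ι → Finset (ZMod v))

def meeting (A : Finset (ZMod v)) (Q : Finset ι) : Finset ι :=
  Q.filter fun c => (A ∩ ℬ c).Nonempty

lemma card_meeting_le_of_isPPC {P : Finset ι} (hP : isPPC ℬ P) (A : Finset (ZMod v)) :
    #(meeting ℬ A P) ≤ #A := by
  have hdisj : (meeting ℬ A P : Set ι).PairwiseDisjoint fun c => A ∩ ℬ c :=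
    fun c hc c' hc' hne => ((hP c (mem_filter.1 hc).1 c' (mem_filter.1 hc').1 hne).mono
      inter_subset_right inter_subset_right)
  calc #(meeting ℬ A P) ≤ #((meeting ℬ A P).biUnion fun c => A ∩ ℬ c) :=
        card_le_card_biUnion hdisj fun c hc => (mem_filter.1 hc).2
    _ ≤ #A := card_le_card (biUnion_subset.2 fun _ _ => inter_subset_left)

variable [NeZero v] [Fintype ι] [DecidableEq ι] [AddAction (ZMod v) ι]

/-- The translate `t +ᵥ b` meets `A` only if `t = p - q` with `p ∈ A` and `q ∈ ℬ b`. -/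
lemma card_meeting_orbit_le {k : ℕ} (hcard : ∀ b, #(ℬ b) = k)
    (hequiv : ∀ (t : ZMod v) (b : ι), ℬ (t +ᵥ b) = (ℬ b).image (· + t))
    (A : Finset (ZMod v)) {O : Finset ι} (hO : O ∈ Orbs v ι) :
    #(meeting ℬ A O) ≤ #A * k := by
  obtain ⟨b, -, rfl⟩ := mem_image.1 hO
  have hsub : meeting ℬ A (orbF v b) ⊆
      (A ×ˢ ℬ b).image fun pq : ZMod v × ZMod v => (pq.1 - pq.2) +ᵥ b := by
    intro c hc
    obtain ⟨hcO, p, hp⟩ := mem_filter.1 hc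
    obtain ⟨t, -, rfl⟩ := mem_image.1 hcO
    rw [mem_inter, hequiv] at hp
    obtain ⟨q, hq, rfl⟩ := mem_image.1 hp.2
    exact mem_image.2 ⟨(q + t, q), mem_product.2 ⟨hp.1, hq⟩, by simp⟩
  calc #(meeting ℬ A (orbF v b)) ≤ #(A ×ˢ ℬ b) := (card_le_card hsub).trans card_image_le
    _ = #A * k := by rw [card_product, hcard]

end Meeting

section Swap

variable {v : ℕ} {ι : Type} [DecidableEq ι] {ℬ : ι → Finset (ZMod v)}

variable (ℬ) in
def swapIn (P : Finset ι) (b : ι) : Finset ι :=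
  insert b (P \ meeting ℬ (ℬ b) P)

lemma disjoint_of_mem_sdiff_meeting {A : Finset (ZMod v)} {P : Finset ι} {c : ι}
    (hc : c ∈ P \ meeting ℬ A P) : Disjoint A (ℬ c) := by
  rw [mem_sdiff, meeting, mem_filter] at hc
  exact not_not.1 fun h => hc.2 ⟨hc.1, not_disjoint_iff_nonempty_inter.1 h⟩

lemma isPPC_swapIn {P : Finset ι} (hP : isPPC ℬ P) (b : ι) : isPPC ℬ (swapIn ℬ P b) := by
  intro c hc c' hc' hne
  rcases mem_insert.1 hc with rfl | hc <;> rcases mem_insert.1 hc' with rfl | hc'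
  · exact absurd rfl hne
  · exact disjoint_of_mem_sdiff_meeting hc'
  · exact (disjoint_of_mem_sdiff_meeting hc).symm
  · exact hP c (mem_sdiff.1 hc).1 c' (mem_sdiff.1 hc').1 hne

lemma meeting_inter (A : Finset (ZMod v)) (P O : Finset ι) :
    meeting ℬ A P ∩ O = meeting ℬ A (P ∩ O) :=
  filter_inter _ _ _

lemma sdiff_meeting_inter (A : Finset (ZMod v)) (P O : Finset ι) :
    (P \ meeting ℬ A P) ∩ O = (P ∩ O) \ (meeting ℬ A P ∩ O) :=
  inf_sdiff_distrib_right _ _ _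

variable [NeZero v] [Fintype ι] [AddAction (ZMod v) ι] {s : ℕ} {P O : Finset ι} {b : ι}

lemma card_meeting_inter_le_one (hb : isGood v ι ℬ s P b) (hO : O ∈ Orbs v ι) :
    #(meeting ℬ (ℬ b) P ∩ O) ≤ 1 := by
  rw [meeting_inter]
  exact hb.1 O hO

lemma meeting_inter_eq_empty (hb : isGood v ι ℬ s P b) (hO : O ∈ Orbs v ι)
    (h : #(P ∩ O) ≤ s - 1) : meeting ℬ (ℬ b) P ∩ O = ∅ := by
  rw [meeting_inter, meeting, filter_eq_empty_iff]
  exact fun c hc => not_disjoint_iff_nonempty_inter.not_right.1 (hb.2 O hO h c hc)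

lemma notMem_of_isGood (hb : isGood v ι ℬ s P b) (hbne : (ℬ b).Nonempty)
    (h : #(P ∩ orbF v b) ≤ s - 1) : b ∉ P := fun hbP =>
  hbne.ne_empty <| disjoint_self.1 <|
    hb.2 _ (orbF_mem_Orbs b) h b (mem_inter.2 ⟨hbP, mem_orbF_self b⟩)

lemma card_swapIn_inter_orbF (hb : isGood v ι ℬ s P b) (hbP : b ∉ P)
    (h : #(P ∩ orbF v b) ≤ s - 1) :
    #(swapIn ℬ P b ∩ orbF v b) = #(P ∩ orbF v b) + 1 := by
  rw [swapIn, insert_inter_of_mem (mem_orbF_self b), sdiff_meeting_inter,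
    meeting_inter_eq_empty hb (orbF_mem_Orbs b) h, sdiff_empty,
    card_insert_of_notMem fun hb' => hbP (mem_inter.1 hb').1]

lemma card_swapIn_inter_of_notMem (hb : isGood v ι ℬ s P b) (hO : O ∈ Orbs v ι) (hbO : b ∉ O)
    (hmax : #(P ∩ O) ≤ s) :
    #(swapIn ℬ P b ∩ O) = #(P ∩ O) ∨
      #(P ∩ O) = s ∧ #(swapIn ℬ P b ∩ O) = s - 1 ∧ (meeting ℬ (ℬ b) P ∩ O).Nonempty := by
  have hsub : meeting ℬ (ℬ b) P ∩ O ⊆ P ∩ O := inter_subset_inter_right (filter_subset _ _)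
  rw [swapIn, insert_inter_of_notMem hbO, sdiff_meeting_inter, card_sdiff_of_subset hsub]
  have hle := card_meeting_inter_le_one hb hO
  rcases (meeting ℬ (ℬ b) P ∩ O).eq_empty_or_nonempty with he | hne
  · left; rw [he, card_empty, Nat.sub_zero]
  · right
    have hfull : ¬ #(P ∩ O) ≤ s - 1 := fun h => hne.ne_empty (meeting_inter_eq_empty hb hO h)
    have hone := hne.card_pos
    exact ⟨by omega, by omega, hne⟩

end Swap

section SwapCounts

variable {v : ℕ} [NeZero v] {ι : Type} [Fintype ι] [DecidableEq ι] [AddAction (ZMod v) ι]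
  {ℬ : ι → Finset (ZMod v)} {s : ℕ} {P : Finset ι} {b : ι}
  (hb : isGood v ι ℬ s P b) (hbP : b ∉ P) (hsmall : #(P ∩ orbF v b) < s - 1)
  (hmax : ∀ O ∈ Orbs v ι, #(P ∩ O) ≤ s)
include hb hbP hsmall hmax

lemma card_swapIn_inter_cases {O : Finset ι} (hO : O ∈ Orbs v ι) :
    O = orbF v b ∧ #(swapIn ℬ P b ∩ O) = #(P ∩ O) + 1 ∨
      #(swapIn ℬ P b ∩ O) = #(P ∩ O) ∨
      #(P ∩ O) = s ∧ #(swapIn ℬ P b ∩ O) = s - 1 ∧ (meeting ℬ (ℬ b) P ∩ O).Nonempty := by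
  by_cases hbO : b ∈ O
  · obtain rfl := eq_orbF_of_mem hO hbO
    exact Or.inl ⟨rfl, card_swapIn_inter_orbF hb hbP hsmall.le⟩
  · exact Or.inr (card_swapIn_inter_of_notMem hb hO hbO (hmax O hO))

lemma dPar_swapIn : dPar v ι s (swapIn ℬ P b) + 1 = dPar v ι s P := by
  have hOb := orbF_mem_Orbs (v := v) b
  rw [dPar_eq_sum, dPar_eq_sum, ← add_sum_erase _ _ hOb, ← add_sum_erase _ _ hOb,
    card_swapIn_inter_orbF hb hbP hsmall.le]
  have hrest : ∀ O ∈ (Orbs v ι).erase (orbF v b),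
      s - 1 - #(swapIn ℬ P b ∩ O) = s - 1 - #(P ∩ O) := by
    intro O hO
    obtain ⟨hne, hO⟩ := mem_erase.1 hO
    rcases card_swapIn_inter_cases hb hbP hsmall hmax hO with ⟨h, -⟩ | h | ⟨h₁, h₂, -⟩
    · exact absurd h hne
    · rw [h]
    · omega
  rw [sum_congr rfl hrest]
  omega

lemma card_swapIn_inter_le {O : Finset ι} (hO : O ∈ Orbs v ι) : #(swapIn ℬ P b ∩ O) ≤ s := by
  have := hmax O hO
  rcases card_swapIn_inter_cases hb hbP hsmall hmax hO with ⟨rfl, h⟩ | h | ⟨-, h, -⟩ <;> omega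

lemma card_inter_lt_of_card_swapIn_inter_lt {O : Finset ι} (hO : O ∈ Orbs v ι)
    (h : #(swapIn ℬ P b ∩ O) < s - 1) : #(P ∩ O) < s - 1 := by
  rcases card_swapIn_inter_cases hb hbP hsmall hmax hO with ⟨rfl, h'⟩ | h' | ⟨-, h', -⟩ <;> omega

lemma tauP_swapIn_le :
    tauP v ι (swapIn ℬ P b) (s - 1) ≤ tauP v ι P (s - 1) + #(meeting ℬ (ℬ b) P) + 1 := by
  have hsub : (Orbs v ι).filter (fun O => #(swapIn ℬ P b ∩ O) = s - 1) ⊆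
      (Orbs v ι).filter (fun O => #(P ∩ O) = s - 1) ∪
        (insert b (meeting ℬ (ℬ b) P)).image (orbF v) := by
    intro O hO
    obtain ⟨hO, hcard⟩ := mem_filter.1 hO
    rcases card_swapIn_inter_cases hb hbP hsmall hmax hO with ⟨rfl, -⟩ | h | ⟨-, -, x, hx⟩
    · exact mem_union_right _ (mem_image_of_mem _ (mem_insert_self _ _))
    · exact mem_union_left _ (mem_filter.2 ⟨hO, h ▸ hcard⟩)
    · obtain ⟨hxM, hxO⟩ := mem_inter.1 hx
      exact mem_union_right _ (mem_image.2
        ⟨x, mem_insert_of_mem hxM, (eq_orbF_of_mem hO hxO).symm⟩)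
  calc tauP v ι (swapIn ℬ P b) (s - 1)
      ≤ tauP v ι P (s - 1) + #((insert b (meeting ℬ (ℬ b) P)).image (orbF v)) :=
        (card_le_card hsub).trans (card_union_le _ _)
    _ ≤ tauP v ι P (s - 1) + #(meeting ℬ (ℬ b) P) + 1 := by
        rw [add_assoc]
        exact Nat.add_le_add_left (card_image_le.trans (card_insert_le _ _)) _

end SwapCounts

section GoodBlocks

variable {v : ℕ} [NeZero v] {ι : Type} [Fintype ι] [DecidableEq ι] [AddAction (ZMod v) ι]
  {ℬ : ι → Finset (ZMod v)} {k s : ℕ} {P : Finset ι} {b : ι}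

variable (ℬ) in
/-- Swapping `b` in can only spoil good blocks that meet `b` or one of these. -/
def orbitMates (P : Finset ι) (b : ι) : Finset ι :=
  (meeting ℬ (ℬ b) P).biUnion fun x => (P ∩ orbF v x).erase x

variable (ℬ k) in
def HasEnoughGoodBlocks (s : ℕ) (P : Finset ι) : Prop :=
  ∀ O ∈ Orbs v ι, #(P ∩ O) ≤ s - 2 →
    k ^ 2 * (k * s - k + 1) * (dPar v ι s P - 1) < #(O.filter (isGood v ι ℬ s P))

lemma card_orbitMates_le (hmax : ∀ O ∈ Orbs v ι, #(P ∩ O) ≤ s) :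
    #(orbitMates ℬ P b) ≤ #(meeting ℬ (ℬ b) P) * (s - 1) := by
  refine card_biUnion_le_card_mul _ _ _ fun x hx => ?_
  have hxP : x ∈ P ∩ orbF v x := mem_inter.2 ⟨(mem_filter.1 hx).1, mem_orbF_self x⟩
  rw [card_erase_of_mem hxP]
  exact Nat.sub_le_sub_right (hmax _ (orbF_mem_Orbs x)) 1

variable (hb : isGood v ι ℬ s P b) (hbP : b ∉ P) (hsmall : #(P ∩ orbF v b) < s - 1)
  (hmax : ∀ O ∈ Orbs v ι, #(P ∩ O) ≤ s)
include hb hbP hsmall hmax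

lemma isGood_swapIn {c : ι} (hc : isGood v ι ℬ s P c) (hcb : ¬(ℬ b ∩ ℬ c).Nonempty)
    (hcY : ∀ c' ∈ orbitMates ℬ P b, ¬(ℬ c' ∩ ℬ c).Nonempty) :
    isGood v ι ℬ s (swapIn ℬ P b) c := by
  constructor
  · intro O hO
    refine (card_le_card fun c' hc' => ?_).trans (hc.1 O hO)
    obtain ⟨hc'SO, hmeet⟩ := mem_filter.1 hc'
    obtain ⟨hc'S, hc'O⟩ := mem_inter.1 hc'SO
    rcases mem_insert.1 hc'S with rfl | hc'P
    · exact absurd (inter_comm (ℬ c) _ ▸ hmeet) hcb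
    · exact mem_filter.2 ⟨mem_inter.2 ⟨(mem_sdiff.1 hc'P).1, hc'O⟩, hmeet⟩
  · intro O hO hle c' hc'
    obtain ⟨hc'S, hc'O⟩ := mem_inter.1 hc'
    rcases mem_insert.1 hc'S with rfl | hc'P
    · exact (disjoint_iff_inter_eq_empty.2 (not_nonempty_iff_eq_empty.1 hcb)).symm
    obtain ⟨hc'P, hc'M⟩ := mem_sdiff.1 hc'P
    by_cases hPO : #(P ∩ O) ≤ s - 1
    · exact hc.2 O hO hPO c' (mem_inter.2 ⟨hc'P, hc'O⟩)
    -- `O` lost a block `x` met by `b`, so `c'` is an orbit mate of `x`.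
    rcases card_swapIn_inter_cases hb hbP hsmall hmax hO with ⟨rfl, -⟩ | h | ⟨-, -, x, hx⟩
    · omega
    · omega
    obtain ⟨hxM, hxO⟩ := mem_inter.1 hx
    have hc'Y : c' ∈ orbitMates ℬ P b := by
      refine mem_biUnion.2 ⟨x, hxM, mem_erase.2 ⟨?_, ?_⟩⟩
      · rintro rfl
        exact hc'M hxM
      · exact mem_inter.2 ⟨hc'P, eq_orbF_of_mem hO hxO ▸ hc'O⟩
    exact (disjoint_iff_inter_eq_empty.2 (not_nonempty_iff_eq_empty.1 (hcY c' hc'Y))).symm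

lemma card_filter_isGood_le (hcard : ∀ b, #(ℬ b) = k)
    (hequiv : ∀ (t : ZMod v) (b : ι), ℬ (t +ᵥ b) = (ℬ b).image (· + t))
    (hP : isPPC ℬ P) {O : Finset ι} (hO : O ∈ Orbs v ι) :
    #(O.filter (isGood v ι ℬ s P)) ≤
      #(O.filter (isGood v ι ℬ s (swapIn ℬ P b))) + k ^ 2 * (k * s - k + 1) := by
  have hsub : O.filter (isGood v ι ℬ s P) ⊆ O.filter (isGood v ι ℬ s (swapIn ℬ P b)) ∪
      meeting ℬ (ℬ b) O ∪ (orbitMates ℬ P b).biUnion fun c' => meeting ℬ (ℬ c') O := by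
    intro c hc
    obtain ⟨hcO, hcg⟩ := mem_filter.1 hc
    by_contra hbad
    simp only [meeting, mem_union, mem_filter, mem_biUnion, not_or, not_exists, not_and] at hbad
    exact hbad.1.1 hcO (isGood_swapIn hb hbP hsmall hmax hcg (hbad.1.2 hcO)
      fun c' hc' => hbad.2 c' hc' hcO)
  have hX : #(meeting ℬ (ℬ b) P) ≤ k := hcard b ▸ card_meeting_le_of_isPPC ℬ hP (ℬ b)
  have hY : #(orbitMates ℬ P b) ≤ k * (s - 1) :=
    (card_orbitMates_le hmax).trans (Nat.mul_le_mul_right _ hX)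
  have hmeet : ∀ c, #(meeting ℬ (ℬ c) O) ≤ k * k := fun c =>
    hcard c ▸ card_meeting_orbit_le ℬ hcard hequiv (ℬ c) hO
  calc #(O.filter (isGood v ι ℬ s P))
      ≤ #(O.filter (isGood v ι ℬ s (swapIn ℬ P b))) + #(meeting ℬ (ℬ b) O) +
          #((orbitMates ℬ P b).biUnion fun c' => meeting ℬ (ℬ c') O) :=
        (card_le_card hsub).trans
          ((card_union_le _ _).trans (Nat.add_le_add_right (card_union_le _ _) _))
    _ ≤ #(O.filter (isGood v ι ℬ s (swapIn ℬ P b))) + k * k + k * (s - 1) * (k * k) := by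
        gcongr
        · exact hmeet b
        · exact (card_biUnion_le_card_mul _ _ _ fun c _ => hmeet c).trans
            (Nat.mul_le_mul_right _ hY)
    _ = #(O.filter (isGood v ι ℬ s (swapIn ℬ P b))) + k ^ 2 * (k * s - k + 1) := by
        rw [← Nat.mul_sub_one]
        ring

lemma hasEnoughGoodBlocks_swapIn (hcard : ∀ b, #(ℬ b) = k)
    (hequiv : ∀ (t : ZMod v) (b : ι), ℬ (t +ᵥ b) = (ℬ b).image (· + t))
    (hP : isPPC ℬ P) (hgood : HasEnoughGoodBlocks ℬ k s P) :
    HasEnoughGoodBlocks ℬ k s (swapIn ℬ P b) := by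
  intro O hO hle
  have hlt : #(swapIn ℬ P b ∩ O) < s - 1 := by omega
  have hpos := dPar_pos_of_card_inter_lt hO hlt
  have hd := dPar_swapIn hb hbP hsmall hmax
  have hmany := hgood O hO (by
    have := card_inter_lt_of_card_swapIn_inter_lt hb hbP hsmall hmax hO hlt
    omega)
  have hloss := card_filter_isGood_le hb hbP hsmall hmax hcard hequiv hP hO
  set M := k ^ 2 * (k * s - k + 1)
  have hsplit : M * (dPar v ι s P - 1) = M * (dPar v ι s (swapIn ℬ P b) - 1) + M := by
    rw [← Nat.mul_succ]
    congr 1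
    omega
  omega

end GoodBlocks

theorem exists_isPPC_card_inter_eq {v : ℕ} [NeZero v] {ι : Type} [Fintype ι] [DecidableEq ι]
    [AddAction (ZMod v) ι] {ℬ : ι → Finset (ZMod v)} {k s : ℕ} (hk : 1 ≤ k)
    (hcard : ∀ b, #(ℬ b) = k)
    (hequiv : ∀ (t : ZMod v) (b : ι), ℬ (t +ᵥ b) = (ℬ b).image (· + t))
    {P : Finset ι} (hP : isPPC ℬ P) (hmax : ∀ O ∈ Orbs v ι, #(P ∩ O) ≤ s)
    (hgood : HasEnoughGoodBlocks ℬ k s P) :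
    ∃ P'' : Finset ι, isPPC ℬ P'' ∧
      tauP v ι P'' (s - 1) ≤ (k + 1) * dPar v ι s P + tauP v ι P (s - 1) ∧
      ∀ O ∈ Orbs v ι, #(P'' ∩ O) = s - 1 ∨ #(P'' ∩ O) = s := by
  induction hd : dPar v ι s P using Nat.strong_induction_on generalizing P with
  | _ d ih =>
  subst hd
  rcases eq_or_ne (dPar v ι s P) 0 with h0 | h0
  · exact ⟨P, hP, le_add_self, fun O hO => card_inter_eq_of_dPar_eq_zero h0 hmax hO⟩
  obtain ⟨O, hO, hlt⟩ := exists_card_inter_lt_of_dPar_ne_zero h0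
  obtain ⟨b, hbmem⟩ := card_pos.1 (lt_of_le_of_lt (Nat.zero_le _) (hgood O hO (by omega)))
  obtain ⟨hbO, hb⟩ := mem_filter.1 hbmem
  obtain rfl := eq_orbF_of_mem hO hbO
  have hbP := notMem_of_isGood hb (card_pos.1 (hcard b ▸ hk)) hlt.le
  have hdP := dPar_swapIn hb hbP hlt hmax
  obtain ⟨P'', hP'', htau, hcards⟩ := ih _ (by omega) (isPPC_swapIn hP b)
    (fun _ => card_swapIn_inter_le hb hbP hlt hmax)
    (hasEnoughGoodBlocks_swapIn hb hbP hlt hmax hcard hequiv hP hgood) rfl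
  refine ⟨P'', hP'', ?_, hcards⟩
  have hX : #(meeting ℬ (ℬ b) P) ≤ k := hcard b ▸ card_meeting_le_of_isPPC ℬ hP (ℬ b)
  have hτ := tauP_swapIn_le hb hbP hlt hmax
  calc tauP v ι P'' (s - 1)
      ≤ (k + 1) * dPar v ι s (swapIn ℬ P b) + (tauP v ι P (s - 1) + k + 1) := by omega
    _ = (k + 1) * dPar v ι s P + tauP v ι P (s - 1) := by rw [← hdP]; ring

theorem stmt_13_general (v k lam : ℕ) [NeZero v] (hk : 2 * lam + 1 ≤ k)
    (ι : Type) [Fintype ι] [DecidableEq ι] [AddAction (ZMod v) ι]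
    (ℬ : ι → Finset (ZMod v))
    (hcard : ∀ b, (ℬ b).card = k)
    (hequiv : ∀ (t : ZMod v) (b : ι), ℬ (t +ᵥ b) = (ℬ b).image (· + t))
    (s : ℕ)
    (P' : Finset ι) (hP' : isPPC ℬ P')
    (hmax : ∀ O ∈ Orbs v ι, (P' ∩ O).card ≤ s)
    (hgood : ∀ O ∈ Orbs v ι, (P' ∩ O).card ≤ s - 2 →
      k ^ 2 * (k * s - k + 1) * (dPar v ι s P' - 1)
        < (O.filter (isGood v ι ℬ s P')).card) :
    ∃ P'' : Finset ι, isPPC ℬ P'' ∧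
      tauP v ι P'' (s - 1) ≤ (k + 1) * dPar v ι s P' + tauP v ι P' (s - 1) ∧
      ∀ O ∈ Orbs v ι, (P'' ∩ O).card = s - 1 ∨ (P'' ∩ O).card = s :=
  exists_isPPC_card_inter_eq (by omega) hcard hequiv hP' hmax hgood

/-- (Lemma 3.2) Let `k ≥ 2λ+1`, `s = ⌊(k-1)/λ⌋`, and let `P'` be a partial parallel
class of a cyclic `(v,k,λ)`-design containing at most `s` blocks from each orbit. If
every orbit meeting `P'` in at most `s-2` blocks contains more than
`k²(ks-k+1)(d(P')-1)` `P'`-good blocks, then there is a partial parallel class `P''`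
with `τ_{s-1}(P'') ≤ (k+1)d(P') + τ_{s-1}(P')` such that every orbit meets `P''` in
exactly `s-1` or exactly `s` blocks. -/
theorem stmt_13 (v k lam : ℕ) [NeZero v] (hlam : 1 ≤ lam) (hk : 2 * lam + 1 ≤ k)
    (ι : Type) [Fintype ι] [DecidableEq ι] [AddAction (ZMod v) ι]
    (ℬ : ι → Finset (ZMod v))
    (hcard : ∀ b, (ℬ b).card = k)
    (hpair : ∀ x y : ZMod v, x ≠ y →
      (Finset.univ.filter (fun b => x ∈ ℬ b ∧ y ∈ ℬ b)).card = lam)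
    (hequiv : ∀ (t : ZMod v) (b : ι), ℬ (t +ᵥ b) = (ℬ b).image (· + t))
    (s : ℕ) (hs : s = (k - 1) / lam)
    (P' : Finset ι) (hP' : isPPC ℬ P')
    (hmax : ∀ O ∈ Orbs v ι, (P' ∩ O).card ≤ s)
    (hgood : ∀ O ∈ Orbs v ι, (P' ∩ O).card ≤ s - 2 →
      k ^ 2 * (k * s - k + 1) * (dPar v ι s P' - 1)
        < (O.filter (isGood v ι ℬ s P')).card) :
    ∃ P'' : Finset ι, isPPC ℬ P'' ∧
      tauP v ι P'' (s - 1) ≤ (k + 1) * dPar v ι s P' + tauP v ι P' (s - 1) ∧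
      ∀ O ∈ Orbs v ι, (P'' ∩ O).card = s - 1 ∨ (P'' ∩ O).card = s :=
  stmt_13_general v k lam hk ι ℬ hcard hequiv s P' hP' hmax hgood
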